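/- arXiv:2512.24339 — 4 statements merged into one kernel-verified Lean document; each statement's English description precedes it below -/
import Mathlib

section
/- For a single ReLU with valid bounds l ≤ s ≤ u (l < u), the bounded big-M constraints z ≥ 0, z ≥ s, z ≤ u·δ, z ≤ s − l(1−δ), l ≤ s ≤ u with δ ∈ {0,1} hold for some δ if and only if z = max(0, s) and l ≤ s ≤ u. -/
theorem bigM_exact (l u s z : ℝ) (hlu : l < u) :
    (∃ δ : ℝ, (δ = 0 ∨ δ = 1) ∧ 0 ≤ z ∧ s ≤ z ∧ z ≤ u * δ ∧
      z ≤ s - l * (1 - δ) ∧ l ≤ s ∧ s ≤ u) ↔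
    (z = max 0 s ∧ l ≤ s ∧ s ≤ u) := by
  constructor
  · rintro ⟨δ, (rfl | rfl), hz0, hsz, hzu, hzl, hls, hsu⟩
    · refine ⟨?_, hls, hsu⟩
      have hz : z = 0 := le_antisymm (by linarith) hz0
      have hs : s ≤ 0 := by linarith
      rw [hz, max_eq_left hs]
    · refine ⟨?_, hls, hsu⟩
      have hz : z = s := le_antisymm (by linarith) hsz
      rw [hz, max_eq_right (by linarith)]
  · rintro ⟨rfl, hls, hsu⟩
    rcases le_or_gt 0 s with h | h
    · exact ⟨1, Or.inr rfl, by positivity, le_max_right _ _,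
        by rw [max_eq_right h]; linarith, by rw [max_eq_right h]; ring_nf; linarith, hls, hsu⟩
    · exact ⟨0, Or.inl rfl, le_max_left _ _, le_max_right 0 s,
        by rw [max_eq_left h.le]; linarith, by rw [max_eq_left h.le]; linarith, hls, hsu⟩
end

section
/- If l < 0 < u, then the convex hull of the graph G(l,u) = {(s,z) ∈ ℝ² : z = max(0,s), l ≤ s ≤ u} equals the set of (s,z) satisfying l ≤ s ≤ u, z ≥ 0, z ≥ s, and z ≤ (u/(u−l))·(s−l). -/
/-!
The three corners `(l, 0)`, `(0, 0)`, `(u, u)` lie on the graph, and the graph lies in the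
triangle cut out by the five inequalities, which is convex. Conversely a point `(s, z)` of the
triangle is the convex combination of the corners with weights `(z - s) / (-l)` at `(l, 0)` and
`z / u` at `(u, u)`; the weight left for `(0, 0)` is nonnegative exactly because of the upper
bound `z ≤ u / (u - l) * (s - l)`.
-/

open Set

def reluGraph (l u : ℝ) : Set (ℝ × ℝ) :=
  {p | p.2 = max 0 p.1 ∧ l ≤ p.1 ∧ p.1 ≤ u}

def reluTriangle (l u : ℝ) : Set (ℝ × ℝ) :=
  {p | l ≤ p.1 ∧ p.1 ≤ u ∧ 0 ≤ p.2 ∧ p.1 ≤ p.2 ∧ p.2 ≤ u / (u - l) * (p.1 - l)}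

theorem smul_add_smul_add_smul_mem_convexHull {E : Type*} [AddCommGroup E] [Module ℝ E]
    {S : Set E} {x y z : E} (hx : x ∈ S) (hy : y ∈ S) (hz : z ∈ S) {a b c : ℝ}
    (ha : 0 ≤ a) (hb : 0 ≤ b) (hc : 0 ≤ c) (habc : a + b + c = 1) :
    a • x + b • y + c • z ∈ convexHull ℝ S := by
  have hpoints : ∀ i, ![x, y, z] i ∈ convexHull ℝ S := by
    intro i
    fin_cases i <;> exact subset_convexHull ℝ S ‹_›
  have hweights : ∀ i, 0 ≤ ![a, b, c] i := by
    intro i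
    fin_cases i <;> assumption
  simpa [Fin.sum_univ_three] using
    (convex_convexHull ℝ S).sum_mem (t := Finset.univ) (fun i _ => hweights i)
      (by simpa [Fin.sum_univ_three] using habc) (fun i _ => hpoints i)

section

variable {l u : ℝ}

theorem le_div_sub_mul_sub_iff (hlu : l < u) {s z : ℝ} :
    z ≤ u / (u - l) * (s - l) ↔ z * (u - l) ≤ u * (s - l) := by
  rw [div_mul_eq_mul_div, le_div_iff₀ (sub_pos.2 hlu)]

theorem convex_reluTriangle (l u : ℝ) : Convex ℝ (reluTriangle l u) := by
  rintro ⟨s₁, z₁⟩ ⟨hl₁, hu₁, hz₁, hs₁, hk₁⟩ ⟨s₂, z₂⟩ ⟨hl₂, hu₂, hz₂, hs₂, hk₂⟩ a b ha hb hab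
  obtain rfl : b = 1 - a := by linarith
  simp only [reluTriangle, mem_ofPred_eq, Prod.fst_add, Prod.snd_add, Prod.smul_fst,
    Prod.smul_snd, smul_eq_mul] at *
  refine ⟨?_, ?_, ?_, ?_, ?_⟩ <;> nlinarith

theorem reluGraph_subset_reluTriangle (hl : l < 0) (hu : 0 ≤ u) :
    reluGraph l u ⊆ reluTriangle l u := by
  rintro ⟨s, z⟩ ⟨hz, hls, hsu⟩
  dsimp only at hz hls hsu
  subst hz
  have hlu : l < u := hl.trans_le hu
  refine ⟨hls, hsu, le_max_left _ _, le_max_right _ _, ?_⟩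
  rw [le_div_sub_mul_sub_iff hlu]
  rcases le_total s 0 with hs | hs
  · rw [max_eq_left hs]
    nlinarith
  · rw [max_eq_right hs]
    nlinarith

theorem corners_subset_reluGraph (hl : l ≤ 0) (hu : 0 ≤ u) :
    {(l, 0), (0, 0), (u, u)} ⊆ reluGraph l u := by
  rintro p (rfl | rfl | rfl) <;>
    simp [reluGraph, hl, hu, hl.trans hu]

theorem reluTriangle_subset_convexHull_corners (hl : l < 0) (hu : 0 < u) :
    reluTriangle l u ⊆ convexHull ℝ {(l, 0), (0, 0), (u, u)} := by
  rintro ⟨s, z⟩ ⟨-, -, hz, hsz, hk⟩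
  dsimp only at hz hsz hk
  rw [le_div_sub_mul_sub_iff (hl.trans hu)] at hk
  have hweight_sum : (z - s) / -l + z / u ≤ 1 := by
    rw [div_add_div _ _ (neg_ne_zero.2 hl.ne) hu.ne', div_le_one (mul_pos (neg_pos.2 hl) hu)]
    nlinarith
  have hcomb : (s, z) = ((z - s) / -l) • ((l, 0) : ℝ × ℝ)
      + (1 - (z - s) / -l - z / u) • ((0, 0) : ℝ × ℝ) + (z / u) • ((u, u) : ℝ × ℝ) := by
    have hl0 : l ≠ 0 := hl.ne
    simp only [Prod.smul_mk, Prod.mk_add_mk, smul_eq_mul, Prod.mk.injEq]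
    constructor <;> field_simp <;> ring
  rw [hcomb]
  exact smul_add_smul_add_smul_mem_convexHull (by simp) (by simp) (by simp)
    (div_nonneg (by linarith) (by linarith)) (by linarith) (div_nonneg hz hu.le) (by ring)

end

theorem relu_hull_description (l u : ℝ) (hl : l < 0) (hu : 0 < u) :
    convexHull ℝ {p : ℝ × ℝ | p.2 = max 0 p.1 ∧ l ≤ p.1 ∧ p.1 ≤ u} =
      {p : ℝ × ℝ | l ≤ p.1 ∧ p.1 ≤ u ∧ 0 ≤ p.2 ∧ p.1 ≤ p.2 ∧
        p.2 ≤ u / (u - l) * (p.1 - l)} :=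
  Subset.antisymm
    (convexHull_min (reluGraph_subset_reluTriangle hl hu.le) (convex_reluTriangle l u))
    ((reluTriangle_subset_convexHull_corners hl hu).trans
      (convexHull_mono (corners_subset_reluGraph hl.le hu.le)))
end

section
/- If l < 0 < u, the convex hull of {(s,z) : z = max(0,s), l ≤ s ≤ u} is the triangle with vertices (l,0), (0,0), and (u,u). -/
theorem relu_hull_triangle (l u : ℝ) (hl : l < 0) (hu : 0 < u) :
    convexHull ℝ {p : ℝ × ℝ | p.2 = max 0 p.1 ∧ l ≤ p.1 ∧ p.1 ≤ u} =
      convexHull ℝ ({(l, 0), (0, 0), (u, u)} : Set (ℝ × ℝ)) := by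
  apply Set.Subset.antisymm
  · apply convexHull_min _ (convex_convexHull ℝ _)
    rintro ⟨s, z⟩ ⟨hz, h1, h2⟩
    simp only at hz h1 h2
    have hmemL : ((l, 0) : ℝ × ℝ) ∈ ({(l, 0), (0, 0), (u, u)} : Set (ℝ × ℝ)) := by simp
    have hmem0 : ((0, 0) : ℝ × ℝ) ∈ ({(l, 0), (0, 0), (u, u)} : Set (ℝ × ℝ)) := by simp
    have hmemU : ((u, u) : ℝ × ℝ) ∈ ({(l, 0), (0, 0), (u, u)} : Set (ℝ × ℝ)) := by simp
    rcases le_or_gt s 0 with hs | hs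
    · have hz' : z = 0 := by rw [hz, max_eq_left hs]
      have : ((s, z) : ℝ × ℝ) ∈ segment ℝ ((l, 0) : ℝ × ℝ) ((0, 0) : ℝ × ℝ) := by
        refine ⟨s / l, 1 - s / l, ?_, ?_, by ring, ?_⟩
        · rw [div_nonneg_iff]; right; exact ⟨hs, hl.le⟩
        · have : s / l ≤ 1 := by
            rw [div_le_one_of_neg hl]
            exact h1
          linarith
        · have hlne : l ≠ 0 := hl.ne
          simp [Prod.ext_iff, hz']
          field_simp
      exact segment_subset_convexHull hmemL hmem0 this
    · have hz' : z = s := by rw [hz, max_eq_right hs.le]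
      have : ((s, z) : ℝ × ℝ) ∈ segment ℝ ((0, 0) : ℝ × ℝ) ((u, u) : ℝ × ℝ) := by
        refine ⟨1 - s / u, s / u, ?_, ?_, by ring, ?_⟩
        · have : s / u ≤ 1 := by
            rw [div_le_one hu]
            exact h2
          linarith
        · positivity
        · have hune : u ≠ 0 := hu.ne'
          simp [Prod.ext_iff, hz']
          field_simp
      exact segment_subset_convexHull hmem0 hmemU this
  · apply convexHull_mono
    rintro p hp
    simp only [Set.mem_insert_iff, Set.mem_singleton_iff] at hp
    rcases hp with rfl | rfl | rfl
    · exact ⟨(max_eq_left hl.le).symm, le_refl l, le_of_lt (hl.trans hu)⟩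
    · exact ⟨by simp, hl.le, hu.le⟩
    · exact ⟨(max_eq_right hu.le).symm, le_of_lt (hl.trans hu), le_refl u⟩
end

section
/- Let l < 0 < u and let Q(l,u) ⊆ ℝ³ be the polyhedron of triples (s,z,δ) satisfying z ≥ 0, z ≥ s, z ≤ u·δ, z ≤ s − l(1−δ), l ≤ s ≤ u, 0 ≤ δ ≤ 1. Then the projection of Q(l,u) onto (s,z) equals the set {(s,z) : l ≤ s ≤ u, z ≥ 0, z ≥ s, z ≤ (u/(u−l))·(s−l)}. -/
theorem relaxed_bigM_projects_to_hull (l u : ℝ) (hl : l < 0) (hu : 0 < u) :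
    {p : ℝ × ℝ | ∃ δ : ℝ, 0 ≤ δ ∧ δ ≤ 1 ∧ 0 ≤ p.2 ∧ p.1 ≤ p.2 ∧
      p.2 ≤ u * δ ∧ p.2 ≤ p.1 - l * (1 - δ) ∧ l ≤ p.1 ∧ p.1 ≤ u} =
    {p : ℝ × ℝ | l ≤ p.1 ∧ p.1 ≤ u ∧ 0 ≤ p.2 ∧ p.1 ≤ p.2 ∧
      p.2 ≤ u / (u - l) * (p.1 - l)} := by
  have hul : (0:ℝ) < u - l := by linarith
  ext ⟨s, z⟩
  simp only [Set.mem_setOf_eq]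
  constructor
  · rintro ⟨δ, h0, h1, hz0, hzs, hzu, hzl, hls, hsu⟩
    refine ⟨hls, hsu, hz0, hzs, ?_⟩
    rw [div_mul_eq_mul_div, le_div_iff₀ hul]
    nlinarith
  · rintro ⟨hls, hsu, hz0, hzs, hcut⟩
    refine ⟨z / u, by positivity, ?_, hz0, hzs, ?_, ?_, hls, hsu⟩
    · rw [div_le_one hu]
      have : u / (u - l) * (s - l) ≤ u := by
        rw [div_mul_eq_mul_div, div_le_iff₀ hul]; nlinarith
      linarith
    · rw [mul_div_cancel₀ _ hu.ne']
    · rw [div_mul_eq_mul_div, le_div_iff₀ hul] at hcut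
      have : z * (u - l) ≤ (s - l) * u := by linarith [hcut]
      have h2 : l * (1 - z / u) = l - l * z / u := by ring
      rw [h2]
      nlinarith [mul_div_cancel₀ (l*z) hu.ne']
end
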